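/- arXiv:1804.04917 — 3 statements merged into one kernel-verified Lean document; each statement's English description precedes it below -/
import Mathlib

section
/- For every even integer r ≥ 2 and every pairing π of {1,...,r}, the genus of π, defined as genus(π) := (1/2)(r/2 + 1 − #(γ ∘ π)) where γ is the cyclic permutation (1 2 ... r) and π is identified with the involution swapping the two elements of each pair, is a nonnegative integer satisfying 0 ≤ genus(π) ≤ r/4. -/
/-!
Write `#σ` for the number of cycles of `σ` (`σ.partition.parts.card`) and `γ` for `finRotate r`.
Multiplying by a transposition changes `#σ` by one: the cycles avoiding the two swapped points
are untouched, and the one or two cycles through them are split or merged. A pairing `π` is a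
product of `r/2` disjoint transpositions, so `#(γπ) ≤ #γ + r/2 = r/2 + 1`. Since
`sign σ = (-1)^(r + #σ)` and `#π = r/2`, multiplicativity of the sign gives
`#(γπ) ≡ #γ + #π - r ≡ r/2 + 1 (mod 2)` for even `r`. Finally `#(γπ) ≥ 1`, so
`2g = r/2 + 1 - #(γπ) ≤ r/2`.
-/

/-- The number of cycles of a permutation of `Fin r` (fixed points counted as cycles). -/
def numCycles {r : ℕ} (σ : Equiv.Perm (Fin r)) : ℕ :=
  σ.cycleType.card + (r - σ.support.card)

/-- A pairing of `{1,...,r}`, identified with a fixed-point-free involution. -/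
def IsPairing {r : ℕ} (π : Equiv.Perm (Fin r)) : Prop :=
  π * π = 1 ∧ ∀ p, π p ≠ p

open Equiv Equiv.Perm Function Finset

theorem Nat.Partition.card_parts_pos {n : ℕ} (p : n.Partition) (hn : n ≠ 0) :
    0 < p.parts.card := by
  rw [Multiset.card_pos]
  intro h
  exact hn (p.parts_sum ▸ h ▸ Multiset.sum_zero)

theorem even_sub_of_neg_one_pow_eq_neg_one_pow {m n : ℕ} (h : (-1 : ℤˣ) ^ m = (-1) ^ n) :
    Even ((m : ℤ) - n) := by
  rwa [← Int.negOnePow_eq_iff, Int.negOnePow_def, Int.negOnePow_def, zpow_natCast, zpow_natCast]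

namespace Equiv.Perm

variable {α : Type*}

theorem sameCycle_iff_of_eq_on_sameCycle [Finite α] {f g : Perm α} {x y : α}
    (hfg : ∀ z, f.SameCycle x z → g z = f z) : g.SameCycle x y ↔ f.SameCycle x y := by
  have hpow : ∀ n : ℕ, (g ^ n) x = (f ^ n) x := by
    intro n
    induction n with
    | zero => rfl
    | succ n ih =>
      rw [pow_succ', mul_apply, ih, hfg _ (sameCycle_pow_right.2 (SameCycle.refl f x)),
        pow_succ', mul_apply]
  constructor
  · intro h
    obtain ⟨n, rfl⟩ := h.exists_nat_pow_eq
    exact hpow n ▸ sameCycle_pow_right.2 (SameCycle.refl f x)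
  · intro h
    obtain ⟨n, rfl⟩ := h.exists_nat_pow_eq
    exact hpow n ▸ sameCycle_pow_right.2 (SameCycle.refl g x)

theorem sameCycle_mul_swap_iff [Finite α] [DecidableEq α] {σ : Perm α} {a b x y : α}
    (ha : ¬σ.SameCycle x a) (hb : ¬σ.SameCycle x b) :
    (σ * swap a b).SameCycle x y ↔ σ.SameCycle x y :=
  sameCycle_iff_of_eq_on_sameCycle fun z hz => by
    rw [mul_apply,
      swap_apply_of_ne_of_ne (by rintro rfl; exact ha hz) (by rintro rfl; exact hb hz)]

variable [Fintype α] [DecidableEq α]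

def cycleClass (σ : Perm α) (x : α) : σ.cycleFactorsFinset ⊕ fixedPoints σ :=
  if hx : x ∈ σ.support then .inl ⟨σ.cycleOf x, cycleOf_mem_cycleFactorsFinset_iff.2 hx⟩
  else .inr ⟨x, notMem_support.1 hx⟩

theorem cycleClass_eq_iff {σ : Perm α} {x y : α} :
    σ.cycleClass x = σ.cycleClass y ↔ σ.SameCycle x y := by
  by_cases hx : x ∈ σ.support <;> by_cases hy : y ∈ σ.support <;>
    simp only [cycleClass, hx, hy, dif_pos, dif_neg, not_false_eq_true, Sum.inl.injEq,
      Sum.inr.injEq, Subtype.mk.injEq, reduceCtorEq, false_iff]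
  · exact (sameCycle_iff_cycleOf_eq_of_mem_support hx hy).symm
  · exact fun h => hy (h.mem_support_iff.1 hx)
  · exact fun h => hx (h.mem_support_iff.2 hy)
  · exact ⟨fun h => by obtain rfl : x = y := congrArg Subtype.val h; rfl,
      fun h => Subtype.ext (h.eq_of_left (notMem_support.1 hx))⟩

theorem cycleClass_surjective (σ : Perm α) : Surjective σ.cycleClass := by
  rintro (⟨c, hc⟩ | ⟨x, hx⟩)
  · obtain ⟨x, hxc⟩ := (mem_cycleFactorsFinset_iff.1 hc).1.nonempty_support
    have hx : x ∈ σ.support := mem_cycleFactorsFinset_support_le hc hxc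
    exact ⟨x, by simp [cycleClass, hx, cycle_is_cycleOf hxc hc]⟩
  · exact ⟨x, by simp [cycleClass, notMem_support.2 hx]⟩

theorem card_quotient_sameCycle (σ : Perm α) :
    Nat.card (Quotient (SameCycle.setoid σ)) = σ.partition.parts.card := by
  have hker : SameCycle.setoid σ = Setoid.ker σ.cycleClass :=
    Setoid.ext fun _ _ => cycleClass_eq_iff.symm
  rw [hker, Nat.card_congr (Setoid.quotientKerEquivOfSurjective _ σ.cycleClass_surjective),
    Nat.card_sum, Nat.card_eq_fintype_card, Nat.card_eq_fintype_card, card_fixedPoints,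
    sum_cycleType, parts_partition, Multiset.card_add, Multiset.card_replicate, cycleType_def,
    Multiset.card_map, Fintype.card_coe]
  rfl

theorem card_parts_partition_mul_swap_le (σ : Perm α) (a b : α) :
    (σ * swap a b).partition.parts.card ≤ σ.partition.parts.card + 1 := by
  set τ := σ * swap a b
  have hτ : τ * swap a b = σ := by rw [mul_assoc, swap_mul_self, mul_one]
  let onCycleAB (x : α) : Prop := σ.SameCycle x a ∨ σ.SameCycle x b
  have onCycleAB_congr {x y : α} (h : σ.SameCycle x y) : onCycleAB x → onCycleAB y :=
    Or.imp h.symm.trans h.symm.trans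
  let F (x : α) : Quotient (SameCycle.setoid τ) :=
    if onCycleAB x then Quotient.mk _ a else Quotient.mk _ x
  have hF (x y : α) (h : σ.SameCycle x y) : F x = F y := by
    by_cases hx : onCycleAB x
    · simp only [F, if_pos hx, if_pos (onCycleAB_congr h hx)]
    · have hy : ¬onCycleAB y := fun hy => hx (onCycleAB_congr h.symm hy)
      simp only [F, if_neg hx, if_neg hy]
      obtain ⟨hxa, hxb⟩ := not_or.1 hx
      exact Quotient.sound ((sameCycle_mul_swap_iff hxa hxb).2 h)
  have hcover (y : α) (hy : onCycleAB y) : τ.SameCycle y a ∨ τ.SameCycle y b := by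
    by_contra! h
    have hστ (z : α) : σ.SameCycle y z ↔ τ.SameCycle y z :=
      hτ ▸ sameCycle_mul_swap_iff h.1 h.2
    exact hy.elim (fun hya => h.1 ((hστ a).1 hya)) fun hyb => h.2 ((hστ b).1 hyb)
  let G (o : Option (Quotient (SameCycle.setoid σ))) : Quotient (SameCycle.setoid τ) :=
    o.elim (Quotient.mk _ b) (Quotient.lift F hF)
  have hG : Surjective G := by
    intro q
    induction q using Quotient.inductionOn with | h y => ?_
    by_cases hy : onCycleAB y
    · rcases hcover y hy with hya | hyb
      · refine ⟨some (Quotient.mk _ a), ?_⟩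
        simp only [G, Option.elim, Quotient.lift_mk, F, ite_self]
        exact Quotient.sound hya.symm
      · exact ⟨none, Quotient.sound hyb.symm⟩
    · refine ⟨some (Quotient.mk _ y), ?_⟩
      simp only [G, Option.elim, Quotient.lift_mk, F, if_neg hy]
  rw [← card_quotient_sameCycle, ← card_quotient_sameCycle, ← Finite.card_option]
  exact Nat.card_le_card_of_surjective G hG

theorem IsCycle.isSwap_of_sq_eq_one {c : Perm α} (hc : c.IsCycle) (h2 : c ^ 2 = 1) :
    c.IsSwap := by
  rw [← card_support_eq_two]
  have : #c.support ≤ 2 := hc.orderOf ▸ Nat.le_of_dvd two_pos (orderOf_dvd_of_pow_eq_one h2)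
  exact le_antisymm this hc.two_le_card_support

theorem card_parts_partition_mul_le_of_sq_eq_one (σ π : Perm α) (hπ : π ^ 2 = 1) :
    2 * (σ * π).partition.parts.card ≤ 2 * σ.partition.parts.card + #π.support := by
  induction π using cycle_induction_on generalizing σ with
  | base_one => simp
  | base_cycles c hc =>
    obtain ⟨a, b, hab, rfl⟩ := hc.isSwap_of_sq_eq_one hπ
    have := card_parts_partition_mul_swap_le σ a b
    rw [card_support_swap hab]
    omega
  | induction_disjoint c τ hcτ _ ihc ihτ =>
    rw [hcτ.commute.mul_pow, (hcτ.pow_disjoint_pow 2 2).mul_eq_one_iff] at hπ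
    have := ihc σ hπ.1
    have := ihτ (σ * c) hπ.2
    rw [← mul_assoc, hcτ.card_support_mul]
    omega

theorem sign_eq_neg_one_pow_card_add_card_parts (σ : Perm α) :
    sign σ = (-1) ^ (Fintype.card α + σ.partition.parts.card) := by
  have hsupp : #σ.support ≤ Fintype.card α := card_le_univ _
  have : Fintype.card α + σ.partition.parts.card =
      σ.cycleType.sum + σ.cycleType.card + 2 * (Fintype.card α - #σ.support) := by
    rw [parts_partition, Multiset.card_add, Multiset.card_replicate, sum_cycleType]
    omega
  rw [this, pow_add, pow_mul, neg_one_sq, one_pow, mul_one, sign_of_cycleType]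

theorem card_parts_partition_of_sq_eq_one {π : Perm α} (hπ : π ^ 2 = 1) :
    2 * π.partition.parts.card + #π.support = 2 * Fintype.card α := by
  have hsum := π.sum_cycleType
  rw [cycleType_of_pow_prime_eq_one hπ, Multiset.sum_replicate, smul_eq_mul] at hsum
  have hsupp : #π.support ≤ Fintype.card α := card_le_univ _
  rw [parts_partition, Multiset.card_add, Multiset.card_replicate]
  omega

theorem card_parts_partition_finRotate {n : ℕ} (hn : 2 ≤ n) :
    (finRotate n).partition.parts.card = 1 := by
  rw [parts_partition, cycleType_finRotate_of_le hn, support_finRotate_of_le hn, card_univ]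
  simp

end Equiv.Perm

theorem numCycles_eq_card_parts_partition {r : ℕ} (σ : Equiv.Perm (Fin r)) :
    numCycles σ = σ.partition.parts.card := by
  rw [numCycles, Equiv.Perm.parts_partition, Multiset.card_add, Multiset.card_replicate,
    Fintype.card_fin]

/-- The genus of a pairing `π` is well defined: `r/2 + 1 - #(γ ∘ π)` is a nonnegative even
integer `2g` with `g ≤ r/4`, where `γ = (1 2 ... r)` is `finRotate r`. -/
theorem stmt1 (r : ℕ) (hr : 2 ≤ r) (hre : Even r) (π : Equiv.Perm (Fin r))
    (hπ : IsPairing π) :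
    ∃ g : ℕ, 2 * g + numCycles (finRotate r * π) = r / 2 + 1 ∧ g ≤ r / 4 := by
  rw [numCycles_eq_card_parts_partition]
  set c := (finRotate r * π).partition.parts.card
  have hπ2 : π ^ 2 = 1 := (sq π).trans hπ.1
  have hsupp : #π.support = r := by
    rw [eq_univ_of_forall fun p => mem_support.2 (hπ.2 p), card_univ, Fintype.card_fin]
  have hπparts : 2 * π.partition.parts.card = r := by
    have := card_parts_partition_of_sq_eq_one hπ2
    simp only [hsupp, Fintype.card_fin] at this
    omega
  have hupper : 2 * c ≤ 2 + r := by
    simpa [hsupp, card_parts_partition_finRotate hr] using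
      card_parts_partition_mul_le_of_sq_eq_one (finRotate r) π hπ2
  have hlower : 0 < c :=
    (finRotate r * π).partition.card_parts_pos (by rw [Fintype.card_fin]; omega)
  have hsign := sign_mul (finRotate r) π
  simp only [sign_eq_neg_one_pow_card_add_card_parts, card_parts_partition_finRotate hr,
    Fintype.card_fin, ← pow_add] at hsign
  obtain ⟨t, ht⟩ := even_sub_of_neg_one_pow_eq_neg_one_pow hsign
  obtain ⟨m, rfl⟩ := hre
  exact ⟨(m + 1 - c) / 2, by omega, by omega⟩
end

section
/- For every even integer r ≥ 2 and every pairing π of {1,...,r}, the genus of π is zero if and only if π is non-crossing, i.e., there exist no pairs {p,q} and {p',q'} in π with p < p' < q < q'. -/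
/-- The genus of a pairing: `genus(π) = (1/2)(r/2 + 1 - #(γ ∘ π))` with `γ = (1 2 ... r)`. -/
def pairingGenus {r : ℕ} (π : Equiv.Perm (Fin r)) : ℕ :=
  (r / 2 + 1 - numCycles (finRotate r * π)) / 2

/-- A pairing is non-crossing if there are no blocks `{p,q}`, `{p',q'}` with `p < p' < q < q'`. -/
def IsNonCrossing {r : ℕ} (π : Equiv.Perm (Fin r)) : Prop :=
  ¬ ∃ p p' : Fin r, p < p' ∧ p' < π p ∧ π p < π p'

/-!
Write `σ = γ π`. Since `sign σ = sign γ · sign π`, the number of cycles of `σ` has the parity of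
`r / 2 + 1`, so the genus vanishes iff `σ` has at least `r / 2` cycles, i.e. at least `r / 2 + 1`.

If `π` has an adjacent block `{m, m + 1}`, then `m + 1` is a fixed point of `σ`; deleting the
block leaves a pairing `π'` of `r - 2` points which crosses iff `π` does, and `γ' π'` is the
first-return map of `σ` to the remaining points, so `σ` has exactly one cycle more than `γ' π'`.
A shortest block of a non-crossing pairing is adjacent, which gives `#(γ π) = r / 2 + 1` by
induction. A crossing pairing either reduces in the same way or has no adjacent block; then `σ`
fixes at most the point `0`, so it has at most `r / 2` cycles.
-/

open Equiv Equiv.Perm Function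

namespace Equiv.Perm

variable {α β γ : Type*}

theorem SameCycle.eq_of_invariant [Finite α] {σ : Perm α} {f : α → γ}
    (hf : ∀ y, f (σ y) = f y) {x y : α} (h : σ.SameCycle x y) : f x = f y := by
  obtain ⟨i, -, rfl⟩ := h.exists_pow_eq'
  clear h
  induction i with
  | zero => rfl
  | succ i ih => rw [pow_succ', mul_apply, hf, ih]

theorem SameCycle.quotient_mk_eq {σ : Perm α} {x y : α} (h : σ.SameCycle x y) :
    (⟦x⟧ : Quotient (SameCycle.setoid σ)) = ⟦y⟧ :=
  Quotient.sound h

section CycleKey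

variable [Fintype α] [DecidableEq α] (σ : Perm α)

def cycleKey (x : α) : σ.cycleFactorsFinset ⊕ fixedPoints σ :=
  if h : σ x = x then .inr ⟨x, h⟩
  else .inl ⟨σ.cycleOf x, cycleOf_mem_cycleFactorsFinset_iff.2 (mem_support.2 h)⟩

theorem cycleKey_eq_iff {x y : α} : cycleKey σ x = cycleKey σ y ↔ σ.SameCycle x y := by
  by_cases hx : σ x = x <;> by_cases hy : σ y = y <;>
    simp only [cycleKey, hx, hy, dite_true, dite_false, reduceCtorEq, false_iff,
      Sum.inl.injEq, Sum.inr.injEq, Subtype.mk.injEq]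
  · refine ⟨fun h => ?_, fun h => Subtype.ext (h.eq_of_left hx)⟩
    obtain rfl : x = y := congrArg Subtype.val h
    rfl
  · exact fun h => hy (h.apply_eq_self_iff.1 hx)
  · exact fun h => hx (h.apply_eq_self_iff.2 hy)
  · exact (sameCycle_iff_cycleOf_eq_of_mem_support (mem_support.2 hx) (mem_support.2 hy)).symm

theorem cycleKey_surjective : Surjective (cycleKey σ) := by
  rintro (⟨c, hc⟩ | ⟨x, hx⟩)
  · obtain ⟨a, ha⟩ := (mem_cycleFactorsFinset_iff.1 hc).1.nonempty_support
    have hσa : σ a ≠ a := mem_support.1 (mem_cycleFactorsFinset_support_le hc ha)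
    exact ⟨a, by simp only [cycleKey, hσa, dite_false, cycle_is_cycleOf ha hc]⟩
  · exact ⟨x, dif_pos hx⟩

noncomputable def quotientSameCycleEquiv :
    Quotient (SameCycle.setoid σ) ≃ σ.cycleFactorsFinset ⊕ fixedPoints σ :=
  Equiv.ofBijective (Quotient.lift (cycleKey σ) fun _ _ h => (cycleKey_eq_iff σ).2 h)
    ⟨fun p q => Quotient.inductionOn₂ p q fun _ _ h => Quotient.sound ((cycleKey_eq_iff σ).1 h),
      fun k => let ⟨x, hx⟩ := cycleKey_surjective σ k; ⟨⟦x⟧, hx⟩⟩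

end CycleKey

section FirstReturn

variable [Finite α] [Finite β] {σ : Perm α} {τ : Perm β}

theorem card_quotient_sameCycle_eq_add_one_of_retraction [DecidableEq α] {e : β → α} {g : α → β}
    {a : α} (hσa : σ a = a) (hea : ∀ x, e x ≠ a) (hge : ∀ x, g (e x) = x)
    (he : ∀ x, σ.SameCycle (e x) (e (τ x))) (heg : ∀ y, y ≠ a → σ.SameCycle (e (g y)) y)
    (hg : ∀ y, y ≠ a → τ.SameCycle (g y) (g (σ y))) :
    Nat.card (Quotient (SameCycle.setoid σ)) = Nat.card (Quotient (SameCycle.setoid τ)) + 1 := by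
  let G : α → Option (Quotient (SameCycle.setoid τ)) := fun y => if y = a then none else some ⟦g y⟧
  have hG : ∀ y, G (σ y) = G y := fun y => by
    by_cases hya : y = a
    · rw [hya, hσa]
    have hσya : σ y ≠ a := fun h => hya (σ.injective (h.trans hσa.symm))
    simp only [G, hya, hσya, if_false, (hg y hya).quotient_mk_eq]
  let H : Quotient (SameCycle.setoid τ) → Quotient (SameCycle.setoid σ) :=
    Quotient.lift (fun x => ⟦e x⟧) fun _ _ h =>
      h.eq_of_invariant (f := fun x => (⟦e x⟧ : Quotient (SameCycle.setoid σ)))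
        fun x => (he x).quotient_mk_eq.symm
  refine (Nat.card_congr ⟨Quotient.lift G fun _ _ h => SameCycle.eq_of_invariant hG h,
    fun o => o.elim ⟦a⟧ H, fun q => ?_, fun o => ?_⟩).trans Finite.card_option
  · induction q using Quotient.inductionOn with | h y => ?_
    by_cases hya : y = a
    · simp only [Quotient.lift_mk, G, hya, if_true, Option.elim_none]
    · simp only [Quotient.lift_mk, G, H, hya, if_false, Option.elim_some]
      exact (heg y hya).quotient_mk_eq
  · rcases o with _ | q
    · simp only [Option.elim_none, Quotient.lift_mk, G, if_true]
    · induction q using Quotient.inductionOn with | h x => ?_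
      simp only [Option.elim_some, H, Quotient.lift_mk, G, hea, if_false, hge]

theorem card_quotient_sameCycle_eq_add_one [DecidableEq α] {e : β → α} {a b : α}
    (he : Injective e) (hrange : ∀ y, y ≠ a → y ≠ b → ∃ x, e x = y)
    (hea : ∀ x, e x ≠ a) (heb : ∀ x, e x ≠ b) (hσa : σ a = a) (hσb : σ b ≠ b)
    (hτ : ∀ x, e (τ x) = if σ (e x) = b then σ (σ (e x)) else σ (e x)) :
    Nat.card (Quotient (SameCycle.setoid σ)) = Nat.card (Quotient (SameCycle.setoid τ)) + 1 := by
  have hba : b ≠ a := fun h => hσb (h ▸ hσa)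
  have hσba : σ b ≠ a := fun h => hba (σ.injective (h.trans hσa.symm))
  have : Nonempty β := ⟨(hrange _ hσba hσb).choose⟩
  have hge : ∀ x, invFun e (e x) = x := leftInverse_invFun he
  have heg : ∀ y, y ≠ a → y ≠ b → e (invFun e y) = y := fun y h1 h2 => invFun_eq (hrange y h1 h2)
  -- `b` is sent to the class of `σ b`, the first point of its cycle inside the range of `e`
  refine card_quotient_sameCycle_eq_add_one_of_retraction
    (g := fun y => invFun e (if y = b then σ b else y)) hσa hea (fun x => ?_) (fun x => ?_)
    (fun y hya => ?_) (fun y hya => ?_)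
  · simp only [heb, if_false, hge]
  · rw [hτ]
    split_ifs
    exacts [⟨2, by rw [zpow_two, mul_apply]⟩, ⟨1, by rw [zpow_one]⟩]
  · by_cases hyb : y = b
    · simp only [hyb, if_true, heg _ hσba hσb]
      exact (sameCycle_apply_right.2 SameCycle.rfl).symm
    · simp only [hyb, if_false, heg y hya hyb, SameCycle.rfl]
  · by_cases hyb : y = b
    · simp only [hyb, hσb, if_true, if_false, SameCycle.rfl]
    obtain ⟨x, rfl⟩ := hrange y hya hyb
    have h := hτ x
    split_ifs at h with hxb
    · rw [hxb] at h
      simp only [hyb, hxb, if_false, if_true, hge, ← h]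
      exact sameCycle_apply_right.2 SameCycle.rfl
    · simp only [hyb, heb, if_false, hge, ← h]
      exact sameCycle_apply_right.2 SameCycle.rfl

end FirstReturn

end Equiv.Perm

variable {r : ℕ}

theorem numCycles_eq_card_quotient (σ : Perm (Fin r)) :
    numCycles σ = Nat.card (Quotient (SameCycle.setoid σ)) := by
  rw [numCycles, Nat.card_congr (quotientSameCycleEquiv σ), Nat.card_sum,
    Nat.card_eq_fintype_card, Nat.card_eq_fintype_card, card_fixedPoints, sum_cycleType,
    Fintype.card_coe, cycleType_def, Multiset.card_map, Fintype.card_fin, Finset.card_val]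

theorem sign_eq_neg_one_pow_numCycles (σ : Perm (Fin r)) :
    sign σ = (-1) ^ (r + numCycles σ) := by
  have h : σ.support.card ≤ r := by simpa using σ.support.card_le_univ
  rw [sign_of_cycleType, sum_cycleType, numCycles,
    show r + (σ.cycleType.card + (r - σ.support.card))
      = σ.support.card + σ.cycleType.card + 2 * (r - σ.support.card) by omega,
    pow_add _ _ (2 * _), pow_mul, neg_one_sq, one_pow, mul_one]

theorem two_mul_numCycles_le (σ : Perm (Fin r)) :
    2 * numCycles σ ≤ r + Fintype.card (fixedPoints σ) := by
  have h₁ : σ.cycleType.card • 2 ≤ σ.support.card :=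
    sum_cycleType σ ▸ Multiset.card_nsmul_le_sum fun _ => two_le_of_mem_cycleType
  have h₂ : σ.support.card ≤ r := by simpa using σ.support.card_le_univ
  rw [numCycles, card_fixedPoints, Fintype.card_fin, sum_cycleType]
  rw [smul_eq_mul] at h₁
  omega

theorem IsPairing.apply_apply {π : Perm (Fin r)} (hπ : IsPairing π) (x : Fin r) : π (π x) = x := by
  rw [← mul_apply, hπ.1, one_apply]

theorem IsPairing.apply_eq_comm {π : Perm (Fin r)} (hπ : IsPairing π) {x y : Fin r} :
    π x = y ↔ π y = x :=
  ⟨fun h => by rw [← h, hπ.apply_apply], fun h => by rw [← h, hπ.apply_apply]⟩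

theorem IsPairing.even {π : Perm (Fin r)} (hπ : IsPairing π) : Even r := by
  have hsupp : π.support = Finset.univ := Finset.eq_univ_of_forall fun x => mem_support.2 (hπ.2 x)
  have hsum := sum_cycleType π
  rw [cycleType_of_pow_prime_eq_one (p := 2) (by rw [sq, hπ.1]), Multiset.sum_replicate,
    smul_eq_mul, hsupp, Finset.card_univ, Fintype.card_fin] at hsum
  exact ⟨π.cycleType.card, by omega⟩

theorem IsPairing.sign {π : Perm (Fin r)} (hπ : IsPairing π) : sign π = (-1) ^ (r / 2) := by
  have hfix : Fintype.card (fixedPoints π) = 0 := Fintype.card_eq_zero_iff.2 ⟨fun x => hπ.2 x x.2⟩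
  rw [sign_of_pow_two_eq_one (by rw [sq, hπ.1]), hfix, Fintype.card_fin, Nat.sub_zero]

theorem IsPairing.of_semiconj {k : ℕ} {π : Perm (Fin r)} {π' : Perm (Fin k)} {e : Fin k → Fin r}
    (hπ : IsPairing π) (he : Injective e) (h : Semiconj e π' π) : IsPairing π' :=
  ⟨Perm.ext fun x => he (by rw [mul_apply, h, h, hπ.apply_apply, one_apply]),
    fun x hx => hπ.2 (e x) (by rw [← h, hx])⟩

theorem numCycles_finRotate_mul_mod_two {π : Perm (Fin r)} (hr : 0 < r) (hπ : IsPairing π) :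
    numCycles (finRotate r * π) % 2 = (r / 2 + 1) % 2 := by
  obtain ⟨k, rfl⟩ := hπ.even
  have h := sign_eq_neg_one_pow_numCycles (finRotate (k + k) * π)
  rw [map_mul, sign_finRotate, hπ.sign, ← pow_add] at h
  set c := numCycles (finRotate (k + k) * π)
  have hsq : (-1 : ℤˣ) ^ (k + k + c + (k + k - 1 + (k + k) / 2)) = 1 := by
    rw [pow_add, h, ← pow_add, ← two_mul, pow_mul, neg_one_sq, one_pow]
  have := Nat.even_iff.1 ((neg_one_pow_eq_one_iff_even (by decide)).1 hsq)
  omega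

theorem val_finRotate (i : Fin r) :
    (finRotate r i : ℕ) = if (i : ℕ) + 1 = r then 0 else (i : ℕ) + 1 := by
  cases r with
  | zero => exact i.elim0
  | succ n => simp only [coe_finRotate, Fin.ext_iff, Fin.val_last, Nat.add_right_cancel_iff]

section SkipPair

variable {n : ℕ} (m : Fin (n + 1))

def skipPair (x : Fin n) : Fin (n + 2) :=
  ⟨if (x : ℕ) < m then x else x + 2, by split <;> omega⟩

@[simp]
theorem val_skipPair (x : Fin n) :
    (skipPair m x : ℕ) = if (x : ℕ) < m then (x : ℕ) else (x : ℕ) + 2 :=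
  rfl

theorem strictMono_skipPair : StrictMono (skipPair m) := fun x y h => by
  rw [Fin.lt_def] at h ⊢
  simp only [val_skipPair]
  split_ifs <;> omega

theorem skipPair_ne_castSucc (x : Fin n) : skipPair m x ≠ m.castSucc := by
  simp only [ne_eq, Fin.ext_iff, val_skipPair, Fin.val_castSucc]
  split_ifs <;> omega

theorem skipPair_ne_succ (x : Fin n) : skipPair m x ≠ m.succ := by
  simp only [ne_eq, Fin.ext_iff, val_skipPair, Fin.val_succ]
  split_ifs <;> omega

theorem exists_skipPair_eq {y : Fin (n + 2)} (h₁ : y ≠ m.castSucc) (h₂ : y ≠ m.succ) :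
    ∃ x, skipPair m x = y := by
  simp only [ne_eq, Fin.ext_iff, Fin.val_castSucc, Fin.val_succ] at h₁ h₂
  refine ⟨⟨if (y : ℕ) < m then y else y - 2, by split <;> omega⟩, Fin.ext ?_⟩
  simp only [val_skipPair]
  split_ifs <;> omega

theorem skipPair_finRotate (x : Fin n) :
    skipPair m (finRotate n x) =
      if finRotate (n + 2) (skipPair m x) = m.castSucc then finRotate (n + 2) m.succ
      else finRotate (n + 2) (skipPair m x) := by
  split_ifs with h <;>
  · rw [Fin.ext_iff] at h ⊢
    simp only [val_skipPair, val_finRotate, Fin.val_castSucc, Fin.val_succ] at h ⊢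
    split_ifs at h ⊢ <;> omega

end SkipPair

section Reduction

variable {n : ℕ} {π : Perm (Fin (n + 2))} {m : Fin (n + 1)}

theorem exists_semiconj_skipPair (hπ : IsPairing π) (hm : π m.castSucc = m.succ) :
    ∃ π' : Perm (Fin n), Semiconj (skipPair m) π' π := by
  have hm' : π m.succ = m.castSucc := hπ.apply_eq_comm.1 hm
  have hmem : ∀ x, ∃ x', skipPair m x' = π (skipPair m x) := fun x =>
    exists_skipPair_eq m (fun h => skipPair_ne_succ m x (by rw [← hm, ← h, hπ.apply_apply]))
      (fun h => skipPair_ne_castSucc m x (by rw [← hm', ← h, hπ.apply_apply]))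
  choose f hf using hmem
  have hinj : Injective f := fun x y h =>
    (strictMono_skipPair m).injective (π.injective (by rw [← hf, ← hf, h]))
  exact ⟨Equiv.ofBijective f (Finite.injective_iff_bijective.1 hinj), hf⟩

theorem isNonCrossing_iff_of_semiconj_skipPair (hπ : IsPairing π) (hm : π m.castSucc = m.succ)
    {π' : Perm (Fin n)} (h : Semiconj (skipPair m) π' π) :
    IsNonCrossing π ↔ IsNonCrossing π' := by
  have hm' : π m.succ = m.castSucc := hπ.apply_eq_comm.1 hm
  have he := strictMono_skipPair m
  refine not_congr ⟨fun ⟨p, p', h₁, h₂, h₃⟩ => ?_, fun ⟨x, x', h₁, h₂, h₃⟩ => ?_⟩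
  · have hp : p ≠ m.castSucc ∧ p ≠ m.succ ∧ p' ≠ m.castSucc ∧ p' ≠ m.succ := by
      refine ⟨?_, ?_, ?_, ?_⟩ <;> rintro rfl <;>
        simp only [hm, hm', Fin.lt_def, Fin.val_castSucc, Fin.val_succ] at h₁ h₂ h₃ <;> omega
    obtain ⟨x, rfl⟩ := exists_skipPair_eq m hp.1 hp.2.1
    obtain ⟨x', rfl⟩ := exists_skipPair_eq m hp.2.2.1 hp.2.2.2
    rw [← h, ← h] at h₃
    rw [← h] at h₂
    exact ⟨x, x', he.lt_iff_lt.1 h₁, he.lt_iff_lt.1 h₂, he.lt_iff_lt.1 h₃⟩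
  · refine ⟨skipPair m x, skipPair m x', he h₁, ?_, ?_⟩
    · rw [← h]; exact he h₂
    · rw [← h, ← h]; exact he h₃

theorem numCycles_finRotate_mul_of_semiconj_skipPair (hn : 1 ≤ n) (hπ : IsPairing π)
    (hm : π m.castSucc = m.succ) {π' : Perm (Fin n)} (h : Semiconj (skipPair m) π' π) :
    numCycles (finRotate (n + 2) * π) = numCycles (finRotate n * π') + 1 := by
  have hm' : π m.succ = m.castSucc := hπ.apply_eq_comm.1 hm
  rw [numCycles_eq_card_quotient, numCycles_eq_card_quotient]
  refine card_quotient_sameCycle_eq_add_one (strictMono_skipPair m).injective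
    (fun y h₁ h₂ => exists_skipPair_eq m h₂ h₁) (skipPair_ne_succ m) (skipPair_ne_castSucc m)
    ?_ ?_ fun x => ?_
  · rw [mul_apply, hm', Fin.ext_iff, val_finRotate]
    simp only [Fin.val_castSucc, Fin.val_succ]
    split_ifs <;> omega
  · rw [mul_apply, hm, ne_eq, Fin.ext_iff, val_finRotate]
    simp only [Fin.val_castSucc, Fin.val_succ]
    split_ifs <;> omega
  · simp only [mul_apply, ← h x, skipPair_finRotate]
    split_ifs with hc
    · rw [hc, hm]
    · rfl

end Reduction

section AdjacentPair

variable {n : ℕ} {π : Perm (Fin (n + 2))}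

theorem IsPairing.exists_adjacent_of_isNonCrossing (hπ : IsPairing π) (hnc : IsNonCrossing π) :
    ∃ m : Fin (n + 1), π m.castSucc = m.succ := by
  -- a block `{i, π i}` with `i < π i` of minimal length `π i - i` is `{i, i + 1}`
  have h0 : (0 : Fin (n + 2)) < π 0 := (Fin.zero_le _).lt_of_ne (hπ.2 0).symm
  obtain ⟨i, hi, hmin⟩ := (Finset.univ.filter fun j => j < π j).exists_min_image
    (fun j => (π j : ℕ) - j) ⟨0, by simpa using h0⟩
  simp only [Finset.mem_filter, Finset.mem_univ, true_and] at hi hmin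
  rw [Fin.lt_def] at hi
  by_contra hadj
  have hi1 : (i : ℕ) + 1 < π i := by
    refine lt_of_le_of_ne hi fun h => hadj ⟨⟨i, by omega⟩, Fin.ext ?_⟩
    rw [Fin.val_succ, h]
    rfl
  obtain ⟨j, hj⟩ : ∃ j : Fin (n + 2), (j : ℕ) = i + 1 := ⟨⟨i + 1, by omega⟩, rfl⟩
  have hπj : π (π j) = j := hπ.apply_apply j
  have hji : (π j : ℕ) ≠ π i := fun h => by
    have : j = i := π.injective (Fin.ext h)
    rw [this] at hj
    omega
  have hjj : (π j : ℕ) ≠ j := fun h => hπ.2 j (Fin.ext h)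
  have hji' : (π j : ℕ) ≠ i := fun h => by
    have : π i = j := by rw [← Fin.ext h, hπj]
    rw [this] at hi1
    omega
  rcases lt_or_gt_of_ne hjj with hlt | hgt
  · exact hnc ⟨π j, i, Fin.lt_def.2 (by omega), by rw [hπj, Fin.lt_def]; omega,
      by rw [hπj, Fin.lt_def]; omega⟩
  rcases lt_or_gt_of_ne hji with hlt' | hgt'
  · have := hmin j (Fin.lt_def.2 hgt)
    omega
  · exact hnc ⟨i, j, Fin.lt_def.2 (by omega), Fin.lt_def.2 (by omega), Fin.lt_def.2 hgt'⟩

theorem IsPairing.exists_adjacent_of_finRotate_mul_apply_eq (hπ : IsPairing π) {k : Fin (n + 2)}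
    (hk : (finRotate (n + 2) * π) k = k) (hk0 : k ≠ 0) :
    ∃ m : Fin (n + 1), π m.castSucc = m.succ := by
  have hv := congrArg Fin.val hk
  rw [mul_apply, val_finRotate] at hv
  have hk0' : (k : ℕ) ≠ 0 := fun h => hk0 (Fin.ext h)
  obtain ⟨m, hm⟩ : ∃ m : Fin (n + 1), (m : ℕ) = k - 1 := ⟨⟨k - 1, by omega⟩, rfl⟩
  have hπk : π k = m.castSucc := by
    rw [Fin.ext_iff, Fin.val_castSucc]
    split_ifs at hv <;> omega
  refine ⟨m, ?_⟩
  rw [← hπk, hπ.apply_apply, Fin.ext_iff, Fin.val_succ]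
  omega

end AdjacentPair

theorem numCycles_finRotate_mul_of_isNonCrossing (n : ℕ) {π : Perm (Fin (n + 2))}
    (hπ : IsPairing π) (hnc : IsNonCrossing π) :
    numCycles (finRotate (n + 2) * π) = n / 2 + 2 := by
  induction n using Nat.strong_induction_on with
  | _ n ih =>
  obtain ⟨m, hm⟩ := hπ.exists_adjacent_of_isNonCrossing hnc
  obtain ⟨π', h⟩ := exists_semiconj_skipPair hπ hm
  have hπ' := hπ.of_semiconj (strictMono_skipPair m).injective h
  rcases n with _ | _ | n
  · have hσ : finRotate 2 * π = 1 := Perm.ext fun x => by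
      have := hπ.2 x
      rw [mul_apply, one_apply, Fin.ext_iff, val_finRotate]
      rw [ne_eq, Fin.ext_iff] at this
      split_ifs <;> omega
    simp [hσ, numCycles]
  · exact (hπ'.2 0 (Fin.ext (by omega))).elim
  · rw [numCycles_finRotate_mul_of_semiconj_skipPair (by omega) hπ hm h,
      ih n (by omega) hπ' ((isNonCrossing_iff_of_semiconj_skipPair hπ hm h).1 hnc)]
    omega

theorem four_le_of_not_isNonCrossing {π : Perm (Fin r)} (h : ¬ IsNonCrossing π) : 4 ≤ r := by
  obtain ⟨p, p', h₁, h₂, h₃⟩ := not_not.1 h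
  rw [Fin.lt_def] at h₁ h₂ h₃
  omega

theorem numCycles_finRotate_mul_le_of_not_isNonCrossing (r : ℕ) {π : Perm (Fin r)}
    (hπ : IsPairing π) (hnc : ¬ IsNonCrossing π) :
    numCycles (finRotate r * π) ≤ r / 2 := by
  induction r using Nat.strong_induction_on with
  | _ r ih =>
  obtain ⟨n, rfl⟩ : ∃ n, r = n + 2 := ⟨r - 2, by have := four_le_of_not_isNonCrossing hnc; omega⟩
  by_cases hadj : ∃ m : Fin (n + 1), π m.castSucc = m.succ
  · obtain ⟨m, hm⟩ := hadj
    obtain ⟨π', h⟩ := exists_semiconj_skipPair hπ hm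
    have hnc' := (isNonCrossing_iff_of_semiconj_skipPair hπ hm h).not.1 hnc
    rw [numCycles_finRotate_mul_of_semiconj_skipPair
      (by have := four_le_of_not_isNonCrossing hnc'; omega) hπ hm h]
    have := ih n (by omega) (hπ.of_semiconj (strictMono_skipPair m).injective h) hnc'
    omega
  · -- without adjacent blocks, `0` is the only possible fixed point of `γ π`
    have hfix : Fintype.card (fixedPoints (finRotate (n + 2) * π)) ≤ 1 :=
      Fintype.card_le_one_iff.2 fun x y => by
        have hx0 : (x : Fin (n + 2)) = 0 := by_contra fun h =>
          hadj (hπ.exists_adjacent_of_finRotate_mul_apply_eq x.2 h)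
        have hy0 : (y : Fin (n + 2)) = 0 := by_contra fun h =>
          hadj (hπ.exists_adjacent_of_finRotate_mul_apply_eq y.2 h)
        exact Subtype.ext (hx0.trans hy0.symm)
    have := two_mul_numCycles_le (finRotate (n + 2) * π)
    obtain ⟨k, hk⟩ := hπ.even
    omega

theorem stmt2_general (r : ℕ) (hr : 2 ≤ r) (π : Equiv.Perm (Fin r))
    (hπ : IsPairing π) :
    pairingGenus π = 0 ↔ IsNonCrossing π := by
  have hpar := numCycles_finRotate_mul_mod_two (by omega) hπ
  rw [pairingGenus]
  refine ⟨fun h => by_contra fun hnc => ?_, fun hnc => ?_⟩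
  · have := numCycles_finRotate_mul_le_of_not_isNonCrossing r hπ hnc
    omega
  · obtain ⟨n, rfl⟩ : ∃ n, r = n + 2 := ⟨r - 2, by omega⟩
    rw [numCycles_finRotate_mul_of_isNonCrossing n hπ hnc]
    omega

theorem stmt2 (r : ℕ) (hr : 2 ≤ r) (hre : Even r) (π : Equiv.Perm (Fin r))
    (hπ : IsPairing π) :
    pairingGenus π = 0 ↔ IsNonCrossing π :=
  stmt2_general r hr π hπ
end

section
/- Let U_t := P(X_t) ⊗ Q(X_t) for a γ-Hölder path X in the algebra A = ℂ^{d×d} and polynomials P, Q. Then U is a controlled biprocess: its increments expand as (δU)_{st} = (δX)_{st} ♯ 𝒰^{X,1}_s + 𝒰^{X,2}_s ♯ (δX)_{st} + U♭_{st} with 𝒰^{X,1}_s = ∂P(X_s) ⊗ Q(X_s), 𝒰^{X,2}_s = P(X_s) ⊗ ∂Q(X_s), and a remainder U♭ that is 2γ-Hölder. -/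
abbrev Mat (d : ℕ) := Matrix (Fin d) (Fin d) ℂ

/-- Coefficient representation of an element of `A ⊗ A`, `A = ℂ^{d×d}`. -/
abbrev Tens (d : ℕ) := (Fin d × Fin d) → (Fin d × Fin d) → ℂ

/-- Coefficient representation of an element of `A ⊗ A ⊗ A`. -/
abbrev Tens3 (d : ℕ) := (Fin d × Fin d) → (Fin d × Fin d) → (Fin d × Fin d) → ℂ

/-- The elementary tensor `A ⊗ B`. -/
noncomputable def tensOf {d : ℕ} (A B : Mat d) : Tens d :=
  fun p q => A p.1 p.2 * B q.1 q.2

/-- `Y ♯ 𝒰`, linear extension of `Y ♯ (U₁ ⊗ U₂ ⊗ U₃) = (U₁ Y U₂) ⊗ U₃`. -/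
noncomputable def sharpLeft {d : ℕ} (Y : Mat d) (U : Tens3 d) : Tens d :=
  fun a c => ∑ j, ∑ k, U (a.1, j) (k, a.2) c * Y j k

/-- `𝒰 ♯ Y`, linear extension of `(U₁ ⊗ U₂ ⊗ U₃) ♯ Y = U₁ ⊗ (U₂ Y U₃)`. -/
noncomputable def sharpRight {d : ℕ} (U : Tens3 d) (Y : Mat d) : Tens d :=
  fun a c => ∑ j, ∑ k, U a (c.1, j) (k, c.2) * Y j k

/-- The non-commutative derivative `∂P(X)`, linear extension of
`∂X^m = Σ_{i=0}^{m-1} X^i ⊗ X^{m-1-i}`. -/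
noncomputable def ncDeriv {d : ℕ} (P : Polynomial ℂ) (X : Mat d) : Tens d :=
  ∑ m ∈ P.support, P.coeff m • ∑ i ∈ Finset.range m, tensOf (X ^ i) (X ^ (m - 1 - i))

/-! Bounds of the form `O((t - s) ^ α)` for `0 ≤ s ≤ t ≤ 1` are `=O[𝓟 unitSimplex]` statements.
A path `f` is controlled, with derivative term `Df`, when `Df = O((t - s) ^ γ)` and
`f t - f s - Df (s, t) = O((t - s) ^ (2γ))`. In a normed ring controlled paths are closed under
sums, scalar multiples and products, with the Leibniz rule `D(fg) = Df · g s + f s · Dg`.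
Giving matrices a submultiplicative norm, `X ^ m` and then `P(X)` are controlled by `X` with
derivative term `∂P(X_s) ♯ (δX)_{st}`. Entrywise, `U = P(X) ⊗ Q(X)` is a product of two controlled
scalar paths, and the Leibniz rule produces exactly the two `♯`-terms of the expansion. -/

open Filter Asymptotics Finset Polynomial

def unitSimplex : Set (ℝ × ℝ) := {p | 0 ≤ p.1 ∧ p.1 ≤ p.2 ∧ p.2 ≤ 1}

noncomputable def holderScale (α : ℝ) (p : ℝ × ℝ) : ℝ := (p.2 - p.1) ^ α

def incr {E : Type*} [Sub E] (f : ℝ → E) (p : ℝ × ℝ) : E := f p.2 - f p.1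

section Scale

variable {E : Type*} [SeminormedAddCommGroup E] {α β : ℝ}

lemma norm_holderScale {p : ℝ × ℝ} (hp : p ∈ unitSimplex) : ‖holderScale α p‖ = holderScale α p :=
  Real.norm_of_nonneg (Real.rpow_nonneg (sub_nonneg.2 hp.2.1) α)

lemma isBigO_holderScale_iff {F : ℝ × ℝ → E} :
    F =O[𝓟 unitSimplex] holderScale α ↔
      ∃ K, ∀ s t, 0 ≤ s → s ≤ t → t ≤ 1 → ‖F (s, t)‖ ≤ K * (t - s) ^ α := by
  rw [isBigO_principal]
  refine exists_congr fun K => ⟨fun h s t hs hst ht => ?_, fun h p hp => ?_⟩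
  · have hp : (s, t) ∈ unitSimplex := ⟨hs, hst, ht⟩
    have hst' := h (s, t) hp
    rwa [norm_holderScale hp] at hst'
  · rw [norm_holderScale hp]
    exact h p.1 p.2 hp.1 hp.2.1 hp.2.2

lemma exists_bound_of_forall_isBigO {ι : Type*} [Fintype ι] {F : ι → ℝ × ℝ → E}
    (h : ∀ i, F i =O[𝓟 unitSimplex] holderScale α) :
    ∃ K, ∀ s t, 0 ≤ s → s ≤ t → t ≤ 1 → ∀ i, ‖F i (s, t)‖ ≤ K * (t - s) ^ α := by
  obtain ⟨K, hK⟩ := isBigO_holderScale_iff.1 (isBigO_pi.2 h : (fun p i => F i p) =O[_] _)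
  exact ⟨K, fun s t hs hst ht i =>
    (norm_le_pi_norm (fun i => F i (s, t)) i).trans (hK s t hs hst ht)⟩

lemma holderScale_isBigO_of_le (hα : 0 ≤ α) (hαβ : α ≤ β) :
    holderScale β =O[𝓟 unitSimplex] holderScale α :=
  isBigO_holderScale_iff.2 ⟨1, fun s t hs hst ht => by
    rw [one_mul, norm_holderScale ⟨hs, hst, ht⟩]
    exact Real.rpow_le_rpow_of_exponent_ge' (by linarith) (by linarith) hα hαβ⟩

lemma holderScale_zero : holderScale 0 = fun _ => 1 := by
  funext p
  simp [holderScale]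

end Scale

section Holder

variable {E : Type*} [SeminormedAddCommGroup E] {γ : ℝ}

def IsHolderOnUnit (γ : ℝ) (f : ℝ → E) : Prop :=
  incr f =O[𝓟 unitSimplex] holderScale γ

lemma IsHolderOnUnit.isBigO_one (hγ : 0 ≤ γ) {f : ℝ → E} (hf : IsHolderOnUnit γ f) :
    f =O[𝓟 (Set.Icc 0 1)] fun _ => (1 : ℝ) := by
  have hS : Tendsto (fun u => ((0 : ℝ), u)) (𝓟 (Set.Icc 0 1)) (𝓟 unitSimplex) :=
    tendsto_principal_principal.2 fun u hu => ⟨le_rfl, hu.1, hu.2⟩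
  have hscale := (holderScale_isBigO_of_le le_rfl hγ).comp_tendsto hS
  rw [holderScale_zero] at hscale
  have hf0 : f = fun u => f 0 + incr f (0, u) := by
    funext u
    simp [incr]
  rw [hf0]
  exact (isBigO_const_one _ _ _).add ((hf.comp_tendsto hS).trans hscale)

lemma IsHolderOnUnit.isBigO_fst (hγ : 0 ≤ γ) {f : ℝ → E} (hf : IsHolderOnUnit γ f) :
    (fun p : ℝ × ℝ => f p.1) =O[𝓟 unitSimplex] fun _ => (1 : ℝ) :=
  (hf.isBigO_one hγ).comp_tendsto <|
    tendsto_principal_principal.2 fun _ hp => ⟨hp.1, hp.2.1.trans hp.2.2⟩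

lemma IsHolderOnUnit.isBigO_snd (hγ : 0 ≤ γ) {f : ℝ → E} (hf : IsHolderOnUnit γ f) :
    (fun p : ℝ × ℝ => f p.2) =O[𝓟 unitSimplex] fun _ => (1 : ℝ) :=
  (hf.isBigO_one hγ).comp_tendsto <|
    tendsto_principal_principal.2 fun _ hp => ⟨hp.1.trans hp.2.1, hp.2.2⟩

lemma IsHolderOnUnit.sum {ι : Type*} {s : Finset ι} {f : ι → ℝ → E}
    (hf : ∀ i ∈ s, IsHolderOnUnit γ (f i)) : IsHolderOnUnit γ fun u => ∑ i ∈ s, f i u := by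
  have h : incr (fun u => ∑ i ∈ s, f i u) = fun p => ∑ i ∈ s, incr (f i) p := by
    funext p
    simp [incr]
  rw [IsHolderOnUnit, h]
  exact IsBigO.fun_sum hf

variable {R : Type*} [SeminormedRing R]

lemma IsHolderOnUnit.const_mul {f : ℝ → R} (hf : IsHolderOnUnit γ f) (c : R) :
    IsHolderOnUnit γ fun u => c * f u := by
  have h : incr (fun u => c * f u) = fun p => c * incr f p := by
    funext p
    simp [incr, mul_sub]
  rw [IsHolderOnUnit, h]
  exact hf.const_mul_left c

lemma IsHolderOnUnit.mul (hγ : 0 ≤ γ) {f g : ℝ → R} (hf : IsHolderOnUnit γ f)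
    (hg : IsHolderOnUnit γ g) : IsHolderOnUnit γ fun u => f u * g u := by
  have h : incr (fun u => f u * g u) = fun p => incr f p * g p.2 + f p.1 * incr g p := by
    funext p
    simp only [incr]
    noncomm_ring
  rw [IsHolderOnUnit, h]
  exact ((IsBigO.mul hf (hg.isBigO_snd hγ)).congr_right fun _ => mul_one _).add
    ((IsBigO.mul (hf.isBigO_fst hγ) hg).congr_right fun _ => one_mul _)

end Holder

section Controlled

variable {E : Type*} [SeminormedAddCommGroup E] {γ : ℝ}

/-- `Df (s, t)` plays the role of `f'_s ♯ (δX)_{st}` for the controlling path `X`. -/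
def IsControlled (γ : ℝ) (f : ℝ → E) (Df : ℝ × ℝ → E) : Prop :=
  Df =O[𝓟 unitSimplex] holderScale γ ∧
    (fun p => incr f p - Df p) =O[𝓟 unitSimplex] holderScale (2 * γ)

lemma IsControlled.isHolderOnUnit (hγ : 0 ≤ γ) {f : ℝ → E} {Df : ℝ × ℝ → E}
    (hf : IsControlled γ f Df) : IsHolderOnUnit γ f := by
  have h : incr f = fun p => Df p + (incr f p - Df p) := by
    funext p
    abel
  rw [IsHolderOnUnit, h]
  exact hf.1.add (hf.2.trans (holderScale_isBigO_of_le hγ (by linarith)))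

lemma isControlled_const (c : E) : IsControlled γ (fun _ => c) fun _ => 0 := by
  simpa [IsControlled, incr] using ⟨isBigO_zero _ _, isBigO_zero _ _⟩

lemma IsHolderOnUnit.isControlled_incr {x : ℝ → E} (hx : IsHolderOnUnit γ x) :
    IsControlled γ x (incr x) := by
  simpa [IsControlled] using ⟨hx, isBigO_zero _ _⟩

lemma IsControlled.sum {ι : Type*} {s : Finset ι} {f : ι → ℝ → E} {Df : ι → ℝ × ℝ → E}
    (hf : ∀ i ∈ s, IsControlled γ (f i) (Df i)) :
    IsControlled γ (fun u => ∑ i ∈ s, f i u) fun p => ∑ i ∈ s, Df i p := by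
  have h : (fun p => incr (fun u => ∑ i ∈ s, f i u) p - ∑ i ∈ s, Df i p) =
      fun p => ∑ i ∈ s, (incr (f i) p - Df i p) := by
    funext p
    simp [incr, sum_sub_distrib]
  rw [IsControlled, h]
  exact ⟨IsBigO.fun_sum fun i hi => (hf i hi).1, IsBigO.fun_sum fun i hi => (hf i hi).2⟩

lemma IsControlled.const_smul {𝕜 : Type*} [NormedField 𝕜] [NormedSpace 𝕜 E] {f : ℝ → E}
    {Df : ℝ × ℝ → E} (hf : IsControlled γ f Df) (c : 𝕜) :
    IsControlled γ (fun u => c • f u) fun p => c • Df p := by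
  have h : (fun p => incr (fun u => c • f u) p - c • Df p) = c • fun p => incr f p - Df p := by
    funext p
    simp [incr, smul_sub]
  rw [IsControlled, h]
  exact ⟨hf.1.const_smul_left c, hf.2.const_smul_left c⟩

variable {R : Type*} [SeminormedRing R]

lemma IsControlled.mul (hγ : 0 ≤ γ) {f g : ℝ → R} {Df Dg : ℝ × ℝ → R}
    (hf : IsControlled γ f Df) (hg : IsControlled γ g Dg) :
    IsControlled γ (fun u => f u * g u) fun p => Df p * g p.1 + f p.1 * Dg p := by
  have hfH := hf.isHolderOnUnit hγ
  have hgH := hg.isHolderOnUnit hγ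
  have h : (fun p => incr (fun u => f u * g u) p - (Df p * g p.1 + f p.1 * Dg p)) =
      fun p => (incr f p - Df p) * g p.2 + Df p * incr g p + f p.1 * (incr g p - Dg p) := by
    funext p
    simp only [incr]
    noncomm_ring
  rw [IsControlled, h]
  refine ⟨((IsBigO.mul hf.1 (hgH.isBigO_fst hγ)).congr_right fun _ => mul_one _).add
    ((IsBigO.mul (hfH.isBigO_fst hγ) hg.1).congr_right fun _ => one_mul _), ?_⟩
  have hsq : (fun p => holderScale γ p * holderScale γ p) =O[𝓟 unitSimplex] holderScale (2 * γ) :=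
    isBigO_holderScale_iff.2 ⟨1, fun s t _ hst _ => by
      rw [one_mul, two_mul, Real.rpow_add_of_nonneg (sub_nonneg.2 hst) hγ hγ]
      simp [holderScale]⟩
  exact (((IsBigO.mul hf.2 (hgH.isBigO_snd hγ)).congr_right fun _ => mul_one _).add
    ((IsBigO.mul hf.1 hgH).trans hsq)).add
    ((IsBigO.mul (hfH.isBigO_fst hγ) hg.2).congr_right fun _ => one_mul _)

lemma isControlled_pow (hγ : 0 ≤ γ) {x : ℝ → R} (hx : IsHolderOnUnit γ x) (m : ℕ) :
    IsControlled γ (fun u => x u ^ m)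
      fun p => ∑ i ∈ range m, x p.1 ^ i * incr x p * x p.1 ^ (m - 1 - i) := by
  induction m with
  | zero => simpa using isControlled_const (γ := γ) (1 : R)
  | succ m ih =>
    have hD : ∀ p : ℝ × ℝ, ∑ i ∈ range (m + 1), x p.1 ^ i * incr x p * x p.1 ^ (m + 1 - 1 - i) =
        (∑ i ∈ range m, x p.1 ^ i * incr x p * x p.1 ^ (m - 1 - i)) * x p.1 +
          x p.1 ^ m * incr x p := by
      intro p
      rw [sum_range_succ, sum_mul, Nat.add_sub_cancel, Nat.sub_self, pow_zero, mul_one]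
      congr 1
      refine sum_congr rfl fun i hi => ?_
      rw [show m - i = m - 1 - i + 1 by have := mem_range.1 hi; omega, pow_succ]
      noncomm_ring
    have hpow : (fun u => x u ^ (m + 1)) = fun u => x u ^ m * x u := funext fun u => pow_succ _ _
    rw [hpow, funext hD]
    exact ih.mul hγ hx.isControlled_incr

end Controlled

section Polynomial

variable {𝕜 A : Type*}

/-- `∂P(a) ♯ h`, the derivative of `a ↦ P(a)` in the direction `h`. -/
noncomputable def polyDirDeriv [CommSemiring 𝕜] [Ring A] [Algebra 𝕜 A] (P : 𝕜[X]) (a h : A) : A :=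
  ∑ m ∈ P.support, P.coeff m • ∑ i ∈ range m, a ^ i * h * a ^ (m - 1 - i)

lemma aeval_eq_sum_support [CommSemiring 𝕜] [Semiring A] [Algebra 𝕜 A] (P : 𝕜[X]) (a : A) :
    aeval a P = ∑ m ∈ P.support, P.coeff m • a ^ m := by
  rw [aeval_def, eval₂_eq_sum, Polynomial.sum]
  simp only [Algebra.smul_def]

lemma isControlled_aeval [NormedField 𝕜] [NormedRing A] [NormedAlgebra 𝕜 A] {γ : ℝ} (hγ : 0 ≤ γ)
    {x : ℝ → A} (hx : IsHolderOnUnit γ x) (P : 𝕜[X]) :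
    IsControlled γ (fun u => aeval (x u) P) fun p => polyDirDeriv P (x p.1) (incr x p) := by
  simp only [aeval_eq_sum_support, polyDirDeriv]
  exact IsControlled.sum fun m _ => (isControlled_pow hγ hx m).const_smul (P.coeff m)

end Polynomial

namespace Matrix

variable {m n α β : Type*} [Fintype m] [Fintype n] [SeminormedAddCommGroup α]

attribute [local instance] Matrix.linftyOpSeminormedAddCommGroup

lemma norm_apply_le_linfty_opNorm (A : Matrix m n α) (i : m) (j : n) : ‖A i j‖ ≤ ‖A‖ := by
  have h : ‖A i j‖₊ ≤ ‖A‖₊ := by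
    rw [linfty_opNNNorm_def]
    exact (single_le_sum (fun _ _ => bot_le) (mem_univ j)).trans
      (le_sup (f := fun i => ∑ j, ‖A i j‖₊) (mem_univ i))
  exact_mod_cast h

lemma linfty_opNorm_le_sum (A : Matrix m n α) : ‖A‖ ≤ ∑ i, ∑ j, ‖A i j‖ := by
  have h : ‖A‖₊ ≤ ∑ i, ∑ j, ‖A i j‖₊ := by
    rw [linfty_opNNNorm_def]
    exact Finset.sup_le fun i _ =>
      single_le_sum (f := fun i => ∑ j, ‖A i j‖₊) (fun _ _ => bot_le) (mem_univ i)
  simpa only [NNReal.coe_sum, coe_nnnorm] using NNReal.coe_le_coe.2 h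

lemma isBigO_linfty_iff {l : Filter β} {F : β → Matrix m n α} {g : β → ℝ} :
    F =O[l] g ↔ ∀ i j, (fun x => F x i j) =O[l] g := by
  refine ⟨fun h i j => (isBigO_of_le l fun x => norm_apply_le_linfty_opNorm (F x) i j).trans h,
    fun h => ?_⟩
  have hsum : (fun x => ∑ i, ∑ j, ‖F x i j‖) =O[l] g :=
    IsBigO.fun_sum fun i _ => IsBigO.fun_sum fun j _ => (h i j).norm_left
  refine (isBigO_of_le l fun x => ?_).trans hsum
  rw [Real.norm_of_nonneg (by positivity)]
  exact linfty_opNorm_le_sum (F x)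

end Matrix

section MatrixEntries

variable {m n α : Type*} [Fintype m] [Fintype n] [SeminormedAddCommGroup α] {γ : ℝ}

attribute [local instance] Matrix.linftyOpSeminormedAddCommGroup

lemma IsHolderOnUnit.matrix_apply {X : ℝ → Matrix m n α} (hX : IsHolderOnUnit γ X) (i : m)
    (j : n) : IsHolderOnUnit γ fun u => X u i j :=
  Matrix.isBigO_linfty_iff.1 hX i j

lemma IsControlled.matrix_apply {F : ℝ → Matrix m n α} {DF : ℝ × ℝ → Matrix m n α}
    (hF : IsControlled γ F DF) (i : m) (j : n) :
    IsControlled γ (fun u => F u i j) fun p => DF p i j :=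
  ⟨Matrix.isBigO_linfty_iff.1 hF.1 i j, Matrix.isBigO_linfty_iff.1 hF.2 i j⟩

end MatrixEntries

section NCDeriv

variable {d : ℕ}

lemma ncDeriv_apply (P : ℂ[X]) (M : Mat d) (p q : Fin d × Fin d) :
    ncDeriv P M p q = ∑ m ∈ P.support, P.coeff m *
      ∑ i ∈ range m, (M ^ i) p.1 p.2 * (M ^ (m - 1 - i)) q.1 q.2 := by
  simp [ncDeriv, tensOf, Finset.sum_apply]

lemma polyDirDeriv_apply (P : ℂ[X]) (M H : Mat d) (a b : Fin d) :
    polyDirDeriv P M H a b = ∑ j, ∑ k, ncDeriv P M (a, j) (k, b) * H j k := by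
  simp only [polyDirDeriv, ncDeriv_apply, Matrix.sum_apply, Matrix.smul_apply, smul_eq_mul,
    Matrix.mul_apply, mul_sum, sum_mul, sum_comm (s := range _) (t := univ),
    sum_comm (s := P.support) (t := univ)]
  rw [sum_comm]
  exact sum_congr rfl fun j _ => sum_congr rfl fun k _ => sum_congr rfl fun m _ =>
    sum_congr rfl fun i _ => by ring

lemma sharpLeft_ncDeriv_mul (P : ℂ[X]) (M H B : Mat d) (a c : Fin d × Fin d) :
    sharpLeft H (fun p q r => ncDeriv P M p q * B r.1 r.2) a c =
      polyDirDeriv P M H a.1 a.2 * B c.1 c.2 := by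
  simp only [sharpLeft, polyDirDeriv_apply, sum_mul, mul_right_comm]

lemma sharpRight_mul_ncDeriv (Q : ℂ[X]) (M H B : Mat d) (a c : Fin d × Fin d) :
    sharpRight (fun p q r => B p.1 p.2 * ncDeriv Q M q r) H a c =
      B a.1 a.2 * polyDirDeriv Q M H c.1 c.2 := by
  simp only [sharpRight, polyDirDeriv_apply, mul_sum, mul_assoc]

end NCDeriv

section MatrixPath

variable {d : ℕ} {γ : ℝ} {X : ℝ → Mat d}

lemma isControlled_aeval_apply (hγ : 0 ≤ γ) (hX : ∀ m n, IsHolderOnUnit γ fun u => X u m n)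
    (P : ℂ[X]) (a b : Fin d) :
    IsControlled γ (fun u => aeval (X u) P a b) fun p => polyDirDeriv P (X p.1) (incr X p) a b := by
  let _ := Matrix.linftyOpNormedRing (n := Fin d) (α := ℂ)
  let _ := Matrix.linftyOpNormedAlgebra (n := Fin d) (R := ℂ) (α := ℂ)
  exact (isControlled_aeval hγ (Matrix.isBigO_linfty_iff.2 hX) P).matrix_apply a b

lemma isHolderOnUnit_ncDeriv (hγ : 0 ≤ γ) (hX : ∀ m n, IsHolderOnUnit γ fun u => X u m n)
    (P : ℂ[X]) (p q : Fin d × Fin d) : IsHolderOnUnit γ fun u => ncDeriv P (X u) p q := by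
  let _ := Matrix.linftyOpNormedRing (n := Fin d) (α := ℂ)
  have hpow (i : ℕ) (a b : Fin d) : IsHolderOnUnit γ fun u => (X u ^ i) a b :=
    ((isControlled_pow hγ (Matrix.isBigO_linfty_iff.2 hX) i).isHolderOnUnit hγ).matrix_apply a b
  simp only [ncDeriv_apply]
  exact IsHolderOnUnit.sum fun m _ =>
    (IsHolderOnUnit.sum fun i _ => (hpow i _ _).mul hγ (hpow _ _ _)).const_mul _

end MatrixPath

theorem stmt12_general (d : ℕ) (γ : ℝ) (hγ0 : 1 / 3 < γ)
    (X : ℝ → Mat d)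
    (hX : ∃ K : ℝ, ∀ s t : ℝ, 0 ≤ s → s ≤ t → t ≤ 1 → ∀ m n : Fin d,
      ‖X t m n - X s m n‖ ≤ K * (t - s) ^ γ)
    (P Q : Polynomial ℂ)
    (U : ℝ → Tens d)
    (hU : ∀ t : ℝ, U t = tensOf (Polynomial.aeval (X t) P) (Polynomial.aeval (X t) Q))
    (U1 U2 : ℝ → Tens3 d)
    (hU1 : ∀ s : ℝ, ∀ p q r : Fin d × Fin d,
      U1 s p q r = ncDeriv P (X s) p q * (Polynomial.aeval (X s) Q) r.1 r.2)
    (hU2 : ∀ s : ℝ, ∀ p q r : Fin d × Fin d,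
      U2 s p q r = (Polynomial.aeval (X s) P) p.1 p.2 * ncDeriv Q (X s) q r) :
    (∃ K : ℝ, ∀ s t : ℝ, 0 ≤ s → s ≤ t → t ≤ 1 → ∀ p q r : Fin d × Fin d,
      ‖U1 t p q r - U1 s p q r‖ ≤ K * (t - s) ^ γ) ∧
    (∃ K : ℝ, ∀ s t : ℝ, 0 ≤ s → s ≤ t → t ≤ 1 → ∀ p q r : Fin d × Fin d,
      ‖U2 t p q r - U2 s p q r‖ ≤ K * (t - s) ^ γ) ∧
    (∃ K : ℝ, ∀ s t : ℝ, 0 ≤ s → s ≤ t → t ≤ 1 → ∀ p q : Fin d × Fin d,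
      ‖U t p q - U s p q - sharpLeft (X t - X s) (U1 s) p q -
          sharpRight (U2 s) (X t - X s) p q‖
        ≤ K * (t - s) ^ (2 * γ)) := by
  have eU : U = fun t => tensOf (aeval (X t) P) (aeval (X t) Q) := funext hU
  have eU1 : U1 = fun s p q r => ncDeriv P (X s) p q * aeval (X s) Q r.1 r.2 := by
    funext s p q r
    exact hU1 s p q r
  have eU2 : U2 = fun s p q r => aeval (X s) P p.1 p.2 * ncDeriv Q (X s) q r := by
    funext s p q r
    exact hU2 s p q r
  subst eU eU1 eU2
  have hγ : 0 ≤ γ := by linarith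
  have hXH (m n : Fin d) : IsHolderOnUnit γ fun u => X u m n :=
    isBigO_holderScale_iff.2 <| hX.imp fun K hK s t hs hst ht => hK s t hs hst ht m n
  have hP := isControlled_aeval_apply hγ hXH P
  have hQ := isControlled_aeval_apply hγ hXH Q
  refine ⟨?_, ?_, ?_⟩
  · obtain ⟨K, hK⟩ := exists_bound_of_forall_isBigO
      (ι := (Fin d × Fin d) × (Fin d × Fin d) × (Fin d × Fin d)) fun i =>
      (isHolderOnUnit_ncDeriv hγ hXH P i.1 i.2.1).mul hγ ((hQ i.2.2.1 i.2.2.2).isHolderOnUnit hγ)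
    exact ⟨K, fun s t hs hst ht p q r => hK s t hs hst ht (p, q, r)⟩
  · obtain ⟨K, hK⟩ := exists_bound_of_forall_isBigO
      (ι := (Fin d × Fin d) × (Fin d × Fin d) × (Fin d × Fin d)) fun i =>
      ((hP i.1.1 i.1.2).isHolderOnUnit hγ).mul hγ (isHolderOnUnit_ncDeriv hγ hXH Q i.2.1 i.2.2)
    exact ⟨K, fun s t hs hst ht p q r => hK s t hs hst ht (p, q, r)⟩
  · obtain ⟨K, hK⟩ := exists_bound_of_forall_isBigO
      (ι := (Fin d × Fin d) × (Fin d × Fin d)) fun i =>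
      ((hP i.1.1 i.1.2).mul hγ (hQ i.2.1 i.2.2)).2
    refine ⟨K, fun s t hs hst ht p q => ?_⟩
    rw [sharpLeft_ncDeriv_mul, sharpRight_mul_ncDeriv]
    refine (le_of_eq ?_).trans (hK s t hs hst ht (p, q))
    congr 1
    simp only [incr, tensOf]
    ring

/-- `U_t = P(X_t) ⊗ Q(X_t)` is a controlled biprocess: its increments expand as
`(δU)_{st} = (δX)_{st} ♯ 𝒰¹_s + 𝒰²_s ♯ (δX)_{st} + U♭_{st}` with
`𝒰¹_s = ∂P(X_s) ⊗ Q(X_s)`, `𝒰²_s = P(X_s) ⊗ ∂Q(X_s)`, the `𝒰`'s `γ`-Hölder and the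
remainder `U♭` `2γ`-Hölder. -/
theorem stmt12 (d : ℕ) (hd : 1 ≤ d) (γ : ℝ) (hγ0 : 1 / 3 < γ) (hγ1 : γ < 1)
    (X : ℝ → Mat d)
    (hX : ∃ K : ℝ, ∀ s t : ℝ, 0 ≤ s → s ≤ t → t ≤ 1 → ∀ m n : Fin d,
      ‖X t m n - X s m n‖ ≤ K * (t - s) ^ γ)
    (P Q : Polynomial ℂ)
    (U : ℝ → Tens d)
    (hU : ∀ t : ℝ, U t = tensOf (Polynomial.aeval (X t) P) (Polynomial.aeval (X t) Q))
    (U1 U2 : ℝ → Tens3 d)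
    (hU1 : ∀ s : ℝ, ∀ p q r : Fin d × Fin d,
      U1 s p q r = ncDeriv P (X s) p q * (Polynomial.aeval (X s) Q) r.1 r.2)
    (hU2 : ∀ s : ℝ, ∀ p q r : Fin d × Fin d,
      U2 s p q r = (Polynomial.aeval (X s) P) p.1 p.2 * ncDeriv Q (X s) q r) :
    (∃ K : ℝ, ∀ s t : ℝ, 0 ≤ s → s ≤ t → t ≤ 1 → ∀ p q r : Fin d × Fin d,
      ‖U1 t p q r - U1 s p q r‖ ≤ K * (t - s) ^ γ) ∧
    (∃ K : ℝ, ∀ s t : ℝ, 0 ≤ s → s ≤ t → t ≤ 1 → ∀ p q r : Fin d × Fin d,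
      ‖U2 t p q r - U2 s p q r‖ ≤ K * (t - s) ^ γ) ∧
    (∃ K : ℝ, ∀ s t : ℝ, 0 ≤ s → s ≤ t → t ≤ 1 → ∀ p q : Fin d × Fin d,
      ‖U t p q - U s p q - sharpLeft (X t - X s) (U1 s) p q -
          sharpRight (U2 s) (X t - X s) p q‖
        ≤ K * (t - s) ^ (2 * γ)) :=
  stmt12_general d γ hγ0 X hX P Q U hU U1 U2 hU1 hU2
end
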